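/- For a counting chain, with f(k) = Σ_{i<k} 1/q_i and g defined by g(0)=0 and g(k) = Σ_{i=0}^{k-1} (1−q_i)/q_i^2, one has Var f(X_n) = E[g(X_n)] for all n ≥ 0. -/

import Mathlib

/-- `stepProb q n k` is the probability `P(X_n = k)` for the counting chain with
transition probabilities `q`: the chain starts at `X_0 = 0` and from state `k`
moves to `k+1` with probability `q k`, otherwise stays at `k`. -/
noncomputable def stepProb (q : ℕ → ℝ) : ℕ → ℕ → ℝ
  | 0, 0 => 1
  | 0, _ + 1 => 0
  | n + 1, 0 => (1 - q 0) * stepProb q n 0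
  | n + 1, k + 1 => (1 - q (k + 1)) * stepProb q n (k + 1) + q k * stepProb q n k

lemma stepProb_eq_zero (q : ℕ → ℝ) : ∀ n k, n < k → stepProb q n k = 0 := by
  intro n
  induction n with
  | zero => intro k hk; cases k with
    | zero => omega
    | succ j => simp [stepProb]
  | succ n ih =>
    intro k hk
    cases k with
    | zero => omega
    | succ j =>
      have h1 : stepProb q n (j+1) = 0 := ih (j+1) (by omega)
      have h2 : stepProb q n j = 0 := ih j (by omega)
      simp [stepProb, h1, h2]

lemma step_sum (q : ℕ → ℝ) (h : ℕ → ℝ) (n : ℕ) :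
    ∑ k ∈ Finset.range (n+2), stepProb q (n+1) k * h k
      = ∑ k ∈ Finset.range (n+1),
          stepProb q n k * ((1 - q k) * h k + q k * h (k+1)) := by
  rw [Finset.sum_range_succ' (fun k => stepProb q (n+1) k * h k) (n+1)]
  have e1 : ∀ k ∈ Finset.range (n+1), stepProb q (n+1) (k+1) * h (k+1)
      = (1 - q (k+1)) * stepProb q n (k+1) * h (k+1)
        + q k * stepProb q n k * h (k+1) := by
    intro k _
    show ((1 - q (k+1)) * stepProb q n (k+1) + q k * stepProb q n k) * h (k+1) = _
    ring
  rw [Finset.sum_congr rfl e1, Finset.sum_add_distrib]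
  have e2 : ∑ k ∈ Finset.range (n+1), (1 - q (k+1)) * stepProb q n (k+1) * h (k+1)
      = ∑ k ∈ Finset.range (n+1), (1 - q k) * stepProb q n k * h k
        - (1 - q 0) * stepProb q n 0 * h 0 := by
    have hs := Finset.sum_range_succ' (fun k => (1 - q k) * stepProb q n k * h k) (n+1)
    have hz : stepProb q n (n+1) = 0 := stepProb_eq_zero q n (n+1) (by omega)
    rw [Finset.sum_range_succ] at hs
    simp only [hz] at hs
    simp only [zero_mul, mul_zero, add_zero] at hs
    linarith [hs]
  rw [e2]
  have e3 : stepProb q (n+1) 0 * h 0 = (1 - q 0) * stepProb q n 0 * h 0 := by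
    show (1 - q 0) * stepProb q n 0 * h 0 = _; rfl
  rw [e3]
  have e4 : ∑ k ∈ Finset.range (n+1), (1 - q k) * stepProb q n k * h k
      + ∑ k ∈ Finset.range (n+1), q k * stepProb q n k * h (k+1)
      = ∑ k ∈ Finset.range (n+1),
          stepProb q n k * ((1 - q k) * h k + q k * h (k+1)) := by
    rw [← Finset.sum_add_distrib]
    apply Finset.sum_congr rfl
    intro k _
    ring
  linarith [e4]

lemma total_prob (q : ℕ → ℝ) : ∀ n, ∑ k ∈ Finset.range (n+1), stepProb q n k = 1 := by
  intro n
  induction n with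
  | zero => simp [stepProb]
  | succ n ih =>
    have := step_sum q (fun _ => 1) n
    simp only [mul_one] at this
    rw [this]
    have : ∀ k ∈ Finset.range (n+1),
        stepProb q n k * ((1 - q k) + q k) = stepProb q n k := by
      intro k _; ring
    rw [Finset.sum_congr rfl this, ih]

lemma mean_f (q : ℕ → ℝ) (hq : ∀ k, 0 < q k ∧ q k ≤ 1) (f : ℕ → ℝ)
    (hf : ∀ k, f k = ∑ i ∈ Finset.range k, (q i)⁻¹) :
    ∀ n, ∑ k ∈ Finset.range (n+1), stepProb q n k * f k = n := by
  intro n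
  induction n with
  | zero => simp [stepProb, hf]
  | succ n ih =>
    rw [step_sum q f n]
    have e : ∀ k ∈ Finset.range (n+1),
        stepProb q n k * ((1 - q k) * f k + q k * f (k+1))
          = stepProb q n k * f k + stepProb q n k := by
      intro k _
      have hfk : f (k+1) = f k + (q k)⁻¹ := by
        rw [hf, hf, Finset.sum_range_succ]
      have hqk : q k ≠ 0 := ne_of_gt (hq k).1
      rw [hfk]
      field_simp
      ring
    rw [Finset.sum_congr rfl e, Finset.sum_add_distrib, ih, total_prob q n]
    push_cast
    ring

/-- With `f k = ∑_{i<k} 1/q i` and the variance function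
`g k = ∑_{i<k} (1 − q i)/(q i)^2`, one has `Var f(X_n) = E[g(X_n)]` for all `n`,
where `Var f(X_n) = E[f(X_n)^2] − n^2`. -/
theorem stmt_7 (q : ℕ → ℝ) (hq : ∀ k, 0 < q k ∧ q k ≤ 1)
    (f g : ℕ → ℝ)
    (hf : ∀ k, f k = ∑ i ∈ Finset.range k, (q i)⁻¹)
    (hg : ∀ k, g k = ∑ i ∈ Finset.range k, (1 - q i) / (q i) ^ 2) :
    ∀ n, (∑ k ∈ Finset.range (n + 1), stepProb q n k * (f k) ^ 2) - (n : ℝ) ^ 2 =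
      ∑ k ∈ Finset.range (n + 1), stepProb q n k * g k := by
  intro n
  induction n with
  | zero => simp [stepProb, hf, hg]
  | succ n ih =>
    rw [step_sum q (fun k => (f k)^2) n, step_sum q g n]
    have e1 : ∀ k ∈ Finset.range (n+1),
        stepProb q n k * ((1 - q k) * (f k)^2 + q k * (f (k+1))^2)
          = stepProb q n k * (f k)^2 + 2 * (stepProb q n k * f k)
            + stepProb q n k * (q k)⁻¹ := by
      intro k _
      have hfk : f (k+1) = f k + (q k)⁻¹ := by
        rw [hf, hf, Finset.sum_range_succ]
      have hqk : q k ≠ 0 := ne_of_gt (hq k).1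
      rw [hfk]
      field_simp
      ring
    have e2 : ∀ k ∈ Finset.range (n+1),
        stepProb q n k * ((1 - q k) * g k + q k * g (k+1))
          = stepProb q n k * g k + stepProb q n k * (q k)⁻¹ - stepProb q n k := by
      intro k _
      have hgk : g (k+1) = g k + (1 - q k) / (q k)^2 := by
        rw [hg, hg, Finset.sum_range_succ]
      have hqk : q k ≠ 0 := ne_of_gt (hq k).1
      rw [hgk]
      field_simp
      ring
    rw [Finset.sum_congr rfl e1, Finset.sum_congr rfl e2]
    simp only [Finset.sum_add_distrib, Finset.sum_sub_distrib, ← Finset.mul_sum]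
    rw [mean_f q hq f hf n, total_prob q n]
    push_cast
    linarith [ih]
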